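/- arXiv:1312.4505 — 4 statements merged into one kernel-verified Lean document; each statement's English description precedes it below -/
import Mathlib

section
/- Let V be a real Hilbert space with inner product a(·,·) and induced norm ‖·‖. Let u_ex, u_D ∈ V and u_N in a larger inner product space W ⊇ V (with a extended to W). Suppose there exists σ̂_N ∈ W with a(σ̂_N − u_ex, φ) = 0 for all φ ∈ V, ‖φ‖ ≤ 1 implies a(u_ex − u_N, φ) = a(σ̂_N − u_N, φ). Then ‖u_ex − u_N‖_W ≤ ‖u_N − u_D‖_W + ‖σ̂_N − u_N‖_W. -/
/-!
Project onto the line `K ⊆ V` spanned by `u_ex - u_D`. Since `σ̂_N - u_ex ⊥ K`, the `K`-component of `u_ex - u_N` is that of `σ̂_N - u_N`;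
since `u_ex - u_D ∈ K`, its `Kᗮ`-component is that of `u_D - u_N`. Projections do not increase
norms, so the triangle inequality on the two components gives the bound.
-/

open scoped RealInnerProductSpace

namespace Submodule

variable {𝕜 E : Type*} [RCLike 𝕜] [NormedAddCommGroup E] [InnerProductSpace 𝕜 E]

theorem norm_le_add_of_sub_mem_orthogonal_of_sub_mem (K : Submodule 𝕜 E)
    [K.HasOrthogonalProjection] {x y z : E} (hxy : x - y ∈ Kᗮ) (hxz : x - z ∈ K) :
    ‖x‖ ≤ ‖y‖ + ‖z‖ := by
  have hK : K.starProjection x = K.starProjection y := by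
    rw [← sub_eq_zero, ← map_sub, starProjection_apply_eq_zero_iff]
    exact hxy
  have hKperp : Kᗮ.starProjection x = Kᗮ.starProjection z := by
    rw [← sub_eq_zero, ← map_sub]
    exact starProjection_orthogonal_apply_eq_zero hxz
  calc ‖x‖ = ‖K.starProjection x + Kᗮ.starProjection x‖ := by
        rw [starProjection_add_starProjection_orthogonal]
    _ ≤ ‖K.starProjection y‖ + ‖Kᗮ.starProjection z‖ := by
        rw [hK, hKperp]
        exact norm_add_le _ _
    _ ≤ ‖y‖ + ‖z‖ :=
        add_le_add (K.norm_starProjection_apply_le y) (Kᗮ.norm_starProjection_apply_le z)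

end Submodule

theorem lemma1_abstract {W : Type*} [NormedAddCommGroup W] [InnerProductSpace ℝ W]
    (V : Submodule ℝ W)
    (uex uD : W) (huex : uex ∈ V) (huD : uD ∈ V)
    (uN : W)
    (sighat : W) (horth : ∀ φ ∈ V, ⟪sighat - uex, φ⟫ = 0) :
    ‖uex - uN‖ ≤ ‖uN - uD‖ + ‖sighat - uN‖ := by
  set K : Submodule ℝ W := ℝ ∙ (uex - uD)
  have hKV : K ≤ V := (Submodule.span_singleton_le_iff_mem _ _).mpr (V.sub_mem huex huD)
  have hσ : uex - uN - (sighat - uN) ∈ Kᗮ := by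
    refine Submodule.orthogonal_le hKV ((V.mem_orthogonal' _).mpr fun φ hφ => ?_)
    rw [sub_sub_sub_cancel_right, ← neg_sub, inner_neg_left, horth φ hφ, neg_zero]
  have hD : uex - uN - (uD - uN) ∈ K := by
    rw [sub_sub_sub_cancel_right]
    exact Submodule.mem_span_singleton_self _
  rw [add_comm, norm_sub_rev uN uD]
  exact K.norm_le_add_of_sub_mem_orthogonal_of_sub_mem hσ hD
end

section
/- Let W be a real inner product space, V ⊆ W a subspace, and u, v ∈ V, ũ, σ̂ ∈ W. Assume ⟨u − σ̂, φ⟩ = 0 for every φ ∈ V. Then ‖u − ũ‖ ≤ ‖v − ũ‖ + ‖σ̂ − ũ‖. -/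
/-!
Put `x = u - ũ` and `d = u - v ∈ V`, so that `x - d = v - ũ`. Admissibility of `σ̂` gives
`⟪x, d⟫ = ⟪σ̂ - ũ, d⟫ ≤ ‖σ̂ - ũ‖ ‖d‖`. Expanding `‖x - d‖²` and using
`2 s ‖d‖ ≤ s² + ‖d‖²` yields `‖x‖² ≤ ‖x - d‖² + s²` whenever `⟪x, d⟫ ≤ s ‖d‖`,
and `√(a² + s²) ≤ a + s` finishes.
-/

open scoped RealInnerProductSpace

section

variable {E : Type*} [NormedAddCommGroup E] [InnerProductSpace ℝ E]

theorem norm_sq_le_norm_sub_sq_add_sq_of_inner_le {x d : E} {s : ℝ}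
    (h : ⟪x, d⟫ ≤ s * ‖d‖) :
    ‖x‖ ^ 2 ≤ ‖x - d‖ ^ 2 + s ^ 2 := by
  rw [norm_sub_sq_real]
  nlinarith [sq_nonneg (s - ‖d‖)]

theorem norm_le_norm_sub_add_of_inner_le {x d : E} {s : ℝ} (hs : 0 ≤ s)
    (h : ⟪x, d⟫ ≤ s * ‖d‖) :
    ‖x‖ ≤ ‖x - d‖ + s := by
  refine le_of_sq_le_sq ?_ (by positivity)
  nlinarith [norm_sq_le_norm_sub_sq_add_sq_of_inner_le h, norm_nonneg (x - d)]

theorem inner_sub_eq_of_inner_sub_eq_zero {u σ φ : E} (h : ⟪u - σ, φ⟫ = 0) (w : E) :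
    ⟪u - w, φ⟫ = ⟪σ - w, φ⟫ := by
  rw [← sub_add_sub_cancel u σ w, inner_add_left, h, zero_add]

end

theorem vohralik_with_admissibility {W : Type*} [NormedAddCommGroup W] [InnerProductSpace ℝ W]
    (V : Submodule ℝ W)
    (u v : W) (hu : u ∈ V) (hv : v ∈ V)
    (utilde sighat : W)
    (horth : ∀ φ ∈ V, ⟪u - sighat, φ⟫ = 0) :
    ‖u - utilde‖ ≤ ‖v - utilde‖ + ‖sighat - utilde‖ := by
  have hinner : ⟪u - utilde, u - v⟫ ≤ ‖sighat - utilde‖ * ‖u - v‖ := by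
    rw [inner_sub_eq_of_inner_sub_eq_zero (horth _ (V.sub_mem hu hv))]
    exact real_inner_le_norm _ _
  simpa only [sub_sub_sub_cancel_left] using
    norm_le_norm_sub_add_of_inner_le (norm_nonneg _) hinner
end

section
/- (Main theorem, abstract form) Let W be a real inner product space, V ⊆ W a subspace, u ∈ V the exact solution, u_D ∈ V, u_N ∈ W, and σ̂ ∈ W with ⟨u − σ̂, φ⟩ = 0 for all φ ∈ V. Suppose moreover ‖u_N − u_D‖² = rᵀz for nonnegative real rᵀz. Then ‖u − u_N‖ ≤ √(rᵀz) + ‖σ̂ − u_N‖. -/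
/-!
Prager–Synge hypercircle argument. With `w = uD - u ∈ V`, `p = u - σ̂ ⊥ V` and `q = σ̂ - uN`,
expanding squares gives `‖p + q‖² + ‖w + q‖² = ‖w + p + q‖² + ‖q‖²`, that is
`‖u - uN‖² + ‖w + q‖² = ‖uD - uN‖² + ‖σ̂ - uN‖²`, so
`‖u - uN‖ ≤ √(‖uD - uN‖² + ‖σ̂ - uN‖²) ≤ ‖uD - uN‖ + ‖σ̂ - uN‖`.
-/

open scoped RealInnerProductSpace

section Hypercircle

variable {W : Type*} [NormedAddCommGroup W] [InnerProductSpace ℝ W]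

theorem norm_add_sq_add_norm_add_sq_of_inner_eq_zero {w p : W} (q : W) (hwp : ⟪w, p⟫ = 0) :
    ‖p + q‖ ^ 2 + ‖w + q‖ ^ 2 = ‖w + p + q‖ ^ 2 + ‖q‖ ^ 2 := by
  simp only [norm_add_sq_real, inner_add_left, hwp]
  ring

theorem norm_sub_sq_le_of_forall_inner_eq_zero (V : Submodule ℝ W) {u v σ : W}
    (hu : u ∈ V) (hv : v ∈ V) (horth : ∀ φ ∈ V, ⟪u - σ, φ⟫ = 0) (x : W) :
    ‖u - x‖ ^ 2 ≤ ‖v - x‖ ^ 2 + ‖σ - x‖ ^ 2 := by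
  have hwp : ⟪v - u, u - σ⟫ = 0 := by
    rw [real_inner_comm]
    exact horth _ (V.sub_mem hv hu)
  have key := norm_add_sq_add_norm_add_sq_of_inner_eq_zero (σ - x) hwp
  simp only [sub_add_sub_cancel] at key
  linarith [sq_nonneg ‖v - u + (σ - x)‖]

theorem norm_sub_le_of_forall_inner_eq_zero (V : Submodule ℝ W) {u v σ : W}
    (hu : u ∈ V) (hv : v ∈ V) (horth : ∀ φ ∈ V, ⟪u - σ, φ⟫ = 0) (x : W) :
    ‖u - x‖ ≤ ‖v - x‖ + ‖σ - x‖ := by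
  refine le_of_sq_le_sq ?_ (by positivity)
  calc ‖u - x‖ ^ 2 ≤ ‖v - x‖ ^ 2 + ‖σ - x‖ ^ 2 :=
        norm_sub_sq_le_of_forall_inner_eq_zero V hu hv horth x
    _ ≤ (‖v - x‖ + ‖σ - x‖) ^ 2 := by nlinarith [mul_nonneg (norm_nonneg (v - x)) (norm_nonneg (σ - x))]

end Hypercircle

theorem main_theorem_abstract_general {W : Type*} [NormedAddCommGroup W] [InnerProductSpace ℝ W]
    (V : Submodule ℝ W)
    (u uD : W) (hu : u ∈ V) (huD : uD ∈ V)
    (uN sighat : W)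
    (horth : ∀ φ ∈ V, ⟪u - sighat, φ⟫ = 0)
    (rz : ℝ)
    (hres : ‖uN - uD‖ ^ 2 = rz) :
    ‖u - uN‖ ≤ Real.sqrt rz + ‖sighat - uN‖ := by
  have hsqrt : Real.sqrt rz = ‖uD - uN‖ := by
    rw [← hres, norm_sub_rev, Real.sqrt_sq (norm_nonneg _)]
  rw [hsqrt]
  exact norm_sub_le_of_forall_inner_eq_zero V hu huD horth uN

theorem main_theorem_abstract {W : Type*} [NormedAddCommGroup W] [InnerProductSpace ℝ W]
    (V : Submodule ℝ W)
    (u uD : W) (hu : u ∈ V) (huD : uD ∈ V)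
    (uN sighat : W)
    (horth : ∀ φ ∈ V, ⟪u - sighat, φ⟫ = 0)
    (rz : ℝ) (hrz : 0 ≤ rz)
    (hres : ‖uN - uD‖ ^ 2 = rz) :
    ‖u - uN‖ ≤ Real.sqrt rz + ‖sighat - uN‖ :=
  main_theorem_abstract_general V u uD hu huD uN sighat horth rz hres
end

section
/- Under the hypotheses of the main theorem (u ∈ V exact, u_D ∈ V, u_N ∈ W, σ̂ ∈ W with ⟨u − σ̂, φ⟩ = 0 for all φ ∈ V, and ‖u_N − u_D‖² = rᵀz), one has ‖u − u_D‖ ≤ 2√(rᵀz) + ‖σ̂ − u_N‖. -/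
open scoped RealInnerProductSpace

/-- Pythagoras: `u` is the orthogonal projection of `s` onto `V`, hence the closest point of `V`. -/
theorem norm_sub_le_norm_sub_of_sub_mem_orthogonal {W : Type*} [NormedAddCommGroup W]
    [InnerProductSpace ℝ W] {V : Submodule ℝ W} {u v s : W} (hu : u ∈ V) (hv : v ∈ V)
    (horth : u - s ∈ Vᗮ) : ‖u - v‖ ≤ ‖s - v‖ := by
  have hperp : ⟪u - v, u - s⟫ = 0 := V.inner_right_of_mem_orthogonal (V.sub_mem hu hv) horth
  have hpyth : ‖s - v‖ * ‖s - v‖ = ‖u - v‖ * ‖u - v‖ + ‖s - u‖ * ‖s - u‖ := by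
    rw [← sub_add_sub_cancel s u v, add_comm, norm_add_sq_eq_norm_sq_add_norm_sq_real]
    rw [← neg_sub u s, inner_neg_right, hperp, neg_zero]
  exact mul_self_le_mul_self_iff (norm_nonneg _) (norm_nonneg _) |>.2 <|
    hpyth ▸ le_add_of_nonneg_right (mul_self_nonneg _)

theorem continuous_field_bound_general {W : Type*} [NormedAddCommGroup W] [InnerProductSpace ℝ W]
    (V : Submodule ℝ W)
    (u uD : W) (hu : u ∈ V) (huD : uD ∈ V)
    (uN sighat : W)
    (horth : ∀ φ ∈ V, ⟪u - sighat, φ⟫ = 0)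
    (rz : ℝ)
    (hres : ‖uN - uD‖ ^ 2 = rz) :
    ‖u - uD‖ ≤ 2 * Real.sqrt rz + ‖sighat - uN‖ := by
  have hproj : ‖u - uD‖ ≤ ‖sighat - uD‖ :=
    norm_sub_le_norm_sub_of_sub_mem_orthogonal hu huD ((V.mem_orthogonal' _).2 horth)
  have htri : ‖sighat - uD‖ ≤ ‖sighat - uN‖ + ‖uN - uD‖ := norm_sub_le_norm_sub_add_norm_sub _ _ _
  have hsqrt : ‖uN - uD‖ = Real.sqrt rz := by rw [← hres, Real.sqrt_sq (norm_nonneg _)]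
  linarith [Real.sqrt_nonneg rz]

theorem continuous_field_bound {W : Type*} [NormedAddCommGroup W] [InnerProductSpace ℝ W]
    (V : Submodule ℝ W)
    (u uD : W) (hu : u ∈ V) (huD : uD ∈ V)
    (uN sighat : W)
    (horth : ∀ φ ∈ V, ⟪u - sighat, φ⟫ = 0)
    (rz : ℝ) (hrz : 0 ≤ rz)
    (hres : ‖uN - uD‖ ^ 2 = rz) :
    ‖u - uD‖ ≤ 2 * Real.sqrt rz + ‖sighat - uN‖ :=
  continuous_field_bound_general V u uD hu huD uN sighat horth rz hres
end
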